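/- Let {C_1,…,C_M} be an (M,L)-CCC, let P be a positive divisor of M, let b^1,…,b^P be unimodular MOSs of length P, let n_1,…,n_{P+1} be nonnegative integers with sum n, and let π_0,…,π_{P−1} be permutations of {1,…,M} satisfying condition (13). For 0 ≤ j ≤ P−1, 0 ≤ ν < M/P, 1 ≤ μ ≤ P define B_{jM+νP+μ} = R(C_{π_j(νP+1)}, …, C_{π_j((ν+1)P)}; b^μ). Then for each fixed j, the set B^j = {B_{jM+1},…,B_{(j+1)M}} is an (M, PL+n) SNC-CCC; that is, C(B_{jM+t_1}, B_{jM+t_2})(τ) = 0 whenever t_1 ≠ t_2 or τ ≠ 0, and C(B_{jM+t}, B_{jM+t})(0) = M·P·L for every 1 ≤ t ≤ M. -/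

import Mathlib

open scoped BigOperators ComplexConjugate

noncomputable section

/-- Zero-extension of a finite complex sequence to an integer-indexed sequence. -/
def zext {L : ℕ} (a : Fin L → ℂ) (i : ℤ) : ℂ :=
  if h : 0 ≤ i ∧ i < (L : ℤ) then a ⟨i.toNat, by omega⟩ else 0

/-- Aperiodic cross-correlation function (ACCF) of two length-`L` complex sequences. -/
def accf {L : ℕ} (a b : Fin L → ℂ) (τ : ℤ) : ℂ :=
  ∑ i : Fin L, zext a ((i : ℤ) + τ) * conj (b i)

/-- Periodic cross-correlation function of two length-`N` complex sequences. -/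
def pccf {N : ℕ} (a b : Fin N → ℂ) (τ : ℤ) : ℂ :=
  accf a b τ + accf a b (τ - (N : ℤ))

/-- ACCF of two `M × L` codes (sum of row-wise ACCFs). -/
def codeACCF {M L : ℕ} (C D : Fin M → Fin L → ℂ) (τ : ℤ) : ℂ :=
  ∑ ν : Fin M, accf (C ν) (D ν) τ

/-- Periodic cross-correlation of two `M × N` codes. -/
def codePCCF {M N : ℕ} (C D : Fin M → Fin N → ℂ) (τ : ℤ) : ℂ :=
  ∑ ν : Fin M, pccf (C ν) (D ν) τ

/-- `C : Fin M → (Fin M → Fin L → ℂ)` is an `(M,L)`-CCC. -/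
def IsCCC {M L : ℕ} (C : Fin M → Fin M → Fin L → ℂ) : Prop :=
  (∀ k₁ k₂ : Fin M, ∀ τ : ℤ, (k₁ ≠ k₂ ∨ τ ≠ 0) → codeACCF (C k₁) (C k₂) τ = 0) ∧
  (∀ k : Fin M, codeACCF (C k) (C k) 0 = (M : ℂ) * (L : ℂ))

/-- Starting column of the `p`-th data block in the construction `R`:
the block `b_{p+1}·C_{p+1}` starts after the zero blocks `n_1, …, n_{p+1}` and the
previous `p` data blocks of width `L`. -/
def Roff {P : ℕ} (L : ℕ) (n : Fin (P + 1) → ℕ) (p : Fin P) : ℕ :=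
  (∑ i : Fin (P + 1), if (i : ℕ) ≤ (p : ℕ) then n i else 0) + (p : ℕ) * L

/-- The construction
`R(C_1,…,C_P; b) = [0^{n_1} ∥ b_1·C_1 ∥ 0^{n_2} ∥ b_2·C_2 ∥ … ∥ 0^{n_P} ∥ b_P·C_P ∥ 0^{n_{P+1}}]`,
an `M × (P·L + n)` matrix.  (The data blocks are pairwise disjoint, so the column `x` entry
is `b_p · (C_p)_{r,j}` if `x = Roff p + j` for (the unique) such `p, j`, and `0` otherwise.) -/
def Rmat {M L P : ℕ} (Cs : Fin P → Fin M → Fin L → ℂ) (b : Fin P → ℂ)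
    (n : Fin (P + 1) → ℕ) : Fin M → Fin (P * L + ∑ i, n i) → ℂ :=
  fun r x => ∑ p : Fin P, ∑ j : Fin L,
    if (x : ℕ) = Roff L n p + (j : ℕ) then b p * Cs p r j else 0

/-- For `t = νP + μ` (0-indexed), the index `νP + p` of the `p`-th constituent code. -/
def blockIdx {M P : ℕ} (hP : P ∣ M) (t : Fin M) (p : Fin P) : Fin M :=
  ⟨(t : ℕ) / P * P + (p : ℕ), by
    obtain ⟨k, rfl⟩ := hP
    have hPpos : 0 < P := p.pos
    have h1 : (t : ℕ) / P < k := Nat.div_lt_of_lt_mul t.isLt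
    have h4 : (p : ℕ) < P := p.isLt
    nlinarith [h1, h4]⟩

/-- Condition (13) of the paper: for `j₁ ≠ j₂`, `π_{j₁}(i₁P+μ) ≠ π_{j₂}(i₂P+μ)`;
equivalently, images of indices with the same residue mod `P` differ. -/
def Cond13 {M P : ℕ} (π : Fin P → Equiv.Perm (Fin M)) : Prop :=
  ∀ j₁ j₂ : Fin P, j₁ ≠ j₂ → ∀ s t : Fin M, (s : ℕ) % P = (t : ℕ) % P →
    π j₁ s ≠ π j₂ t

/-- Condition (14) of the paper: if `π_{j₁}(i₁P+μ₁) = π_{j₂}(i₂P+μ₂)` for `j₁ ≠ j₂`, then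
`π_{j₁}(i₁P+μ₁+α) ≠ π_{j₂}(i₂P+μ₂+α)` for every nonzero shift `α` keeping both positions
inside their blocks. -/
def Cond14 {M P : ℕ} (π : Fin P → Equiv.Perm (Fin M)) : Prop :=
  ∀ j₁ j₂ : Fin P, j₁ ≠ j₂ → ∀ s t : Fin M, π j₁ s = π j₂ t →
    ∀ α : ℤ, α ≠ 0 →
      0 ≤ ((s : ℕ) : ℤ) % (P : ℤ) + α → ((s : ℕ) : ℤ) % (P : ℤ) + α < (P : ℤ) →
      0 ≤ ((t : ℕ) : ℤ) % (P : ℤ) + α → ((t : ℕ) : ℤ) % (P : ℤ) + α < (P : ℤ) →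
      ∀ s' t' : Fin M, ((s' : ℕ) : ℤ) = ((s : ℕ) : ℤ) + α → ((t' : ℕ) : ℤ) = ((t : ℕ) : ℤ) + α →
        π j₁ s' ≠ π j₂ t'



section Aux

lemma zext_eq_sum {L : ℕ} (a : Fin L → ℂ) (y : ℤ) :
    zext a y = ∑ j : Fin L, if y = ((j : ℕ) : ℤ) then a j else 0 := by
  unfold zext
  by_cases h : 0 ≤ y ∧ y < (L : ℤ)
  · rw [dif_pos h]
    rw [Finset.sum_eq_single (⟨y.toNat, by omega⟩ : Fin L)]
    · rw [if_pos (by simp only [Fin.val_mk]; omega)]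
    · intro b _ hb
      apply if_neg
      intro hy
      exact hb (Fin.ext (by simp only [Fin.val_mk]; omega))
    · intro h'; exact absurd (Finset.mem_univ _) h'
  · rw [dif_neg h]
    refine (Finset.sum_eq_zero fun j _ => ?_).symm
    have := j.isLt
    apply if_neg
    omega

lemma sum_fin_ite {N : ℕ} (c : ℕ) (hc : c < N) (f : Fin N → ℂ) :
    (∑ x : Fin N, if (x : ℕ) = c then f x else 0) = f ⟨c, hc⟩ := by
  rw [Finset.sum_eq_single (⟨c, hc⟩ : Fin N)]
  · simp
  · intro b _ hb
    exact if_neg fun h => hb (Fin.ext h)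
  · intro h; exact absurd (Finset.mem_univ _) h

lemma zext_sum {L : ℕ} {ι : Type*} (s : Finset ι) (f : ι → Fin L → ℂ) (y : ℤ) :
    zext (fun x => ∑ p ∈ s, f p x) y = ∑ p ∈ s, zext (f p) y := by
  unfold zext
  by_cases h : 0 ≤ y ∧ y < (L : ℤ)
  · simp only [dif_pos h]
  · simp only [dif_neg h, Finset.sum_const_zero]

lemma accf_sum_sum {L : ℕ} {ι κ : Type*} [Fintype ι] [Fintype κ]
    (A : ι → Fin L → ℂ) (B : κ → Fin L → ℂ) (τ : ℤ) :
    accf (fun x => ∑ p, A p x) (fun x => ∑ q, B q x) τ =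
      ∑ p, ∑ q, accf (A p) (B q) τ := by
  unfold accf
  simp only [zext_sum, map_sum, Finset.sum_mul_sum]
  rw [Finset.sum_comm]
  exact Finset.sum_congr rfl fun p _ => Finset.sum_comm

lemma zext_block {L N : ℕ} (o : ℕ) (ho : o + L ≤ N) (e : Fin L → ℂ) (y : ℤ) :
    zext (fun x : Fin N => ∑ j : Fin L, if (x : ℕ) = o + (j : ℕ) then e j else 0) y
      = ∑ j : Fin L, if y = ((o + (j : ℕ) : ℕ) : ℤ) then e j else 0 := by
  unfold zext
  by_cases h : 0 ≤ y ∧ y < (N : ℤ)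
  · rw [dif_pos h]
    refine Finset.sum_congr rfl fun j _ => ?_
    refine if_congr ?_ rfl rfl
    simp only [Fin.val_mk]
    omega
  · rw [dif_neg h]
    refine (Finset.sum_eq_zero fun j _ => ?_).symm
    have := j.isLt
    apply if_neg
    omega

lemma accf_block {L N : ℕ} (o1 o2 : ℕ) (h1 : o1 + L ≤ N) (h2 : o2 + L ≤ N)
    (u v : ℂ) (c1 c2 : Fin L → ℂ) (τ : ℤ) :
    accf (fun x : Fin N => ∑ j : Fin L, if (x : ℕ) = o1 + (j : ℕ) then u * c1 j else 0)
         (fun x : Fin N => ∑ j : Fin L, if (x : ℕ) = o2 + (j : ℕ) then v * c2 j else 0) τ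
      = u * conj v * accf c1 c2 (τ + (o2 : ℤ) - (o1 : ℤ)) := by
  have lhs_eq :
      accf (fun x : Fin N => ∑ j : Fin L, if (x : ℕ) = o1 + (j : ℕ) then u * c1 j else 0)
           (fun x : Fin N => ∑ j : Fin L, if (x : ℕ) = o2 + (j : ℕ) then v * c2 j else 0) τ
        = ∑ j2 : Fin L, ∑ j1 : Fin L,
            if ((o2 + (j2 : ℕ) : ℕ) : ℤ) + τ = ((o1 + (j1 : ℕ) : ℕ) : ℤ)
            then u * c1 j1 * conj (v * c2 j2) else 0 := by
    unfold accf
    calc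
      (∑ x : Fin N, zext (fun x : Fin N => ∑ j : Fin L, if (x : ℕ) = o1 + (j : ℕ) then u * c1 j else 0) ((x : ℤ) + τ) *
          conj (∑ j : Fin L, if (x : ℕ) = o2 + (j : ℕ) then v * c2 j else 0))
          = ∑ x : Fin N, ∑ j2 : Fin L,
              if (x : ℕ) = o2 + (j2 : ℕ) then
                zext (fun x : Fin N => ∑ j : Fin L, if (x : ℕ) = o1 + (j : ℕ) then u * c1 j else 0) ((x : ℤ) + τ) * conj (v * c2 j2)
              else 0 := by
            refine Finset.sum_congr rfl fun x _ => ?_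
            rw [map_sum, Finset.mul_sum]
            refine Finset.sum_congr rfl fun j2 _ => ?_
            rw [apply_ite conj, map_zero, mul_ite, mul_zero]
      _ = ∑ j2 : Fin L, ∑ x : Fin N,
              if (x : ℕ) = o2 + (j2 : ℕ) then
                zext (fun x : Fin N => ∑ j : Fin L, if (x : ℕ) = o1 + (j : ℕ) then u * c1 j else 0) ((x : ℤ) + τ) * conj (v * c2 j2)
              else 0 := Finset.sum_comm
      _ = ∑ j2 : Fin L,
              zext (fun x : Fin N => ∑ j : Fin L, if (x : ℕ) = o1 + (j : ℕ) then u * c1 j else 0)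
                (((o2 + (j2 : ℕ) : ℕ) : ℤ) + τ) * conj (v * c2 j2) := by
            refine Finset.sum_congr rfl fun j2 _ => ?_
            rw [sum_fin_ite (o2 + (j2 : ℕ)) (by have := j2.isLt; omega)
              (fun x : Fin N =>
                zext (fun x : Fin N => ∑ j : Fin L, if (x : ℕ) = o1 + (j : ℕ) then u * c1 j else 0) ((x : ℤ) + τ) * conj (v * c2 j2))]
      _ = ∑ j2 : Fin L, ∑ j1 : Fin L,
            if ((o2 + (j2 : ℕ) : ℕ) : ℤ) + τ = ((o1 + (j1 : ℕ) : ℕ) : ℤ)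
            then u * c1 j1 * conj (v * c2 j2) else 0 := by
            refine Finset.sum_congr rfl fun j2 _ => ?_
            rw [zext_block o1 h1, Finset.sum_mul]
            refine Finset.sum_congr rfl fun j1 _ => ?_
            rw [ite_mul, zero_mul]
  rw [lhs_eq]
  have rhs_eq : u * conj v * accf c1 c2 (τ + (o2 : ℤ) - (o1 : ℤ))
      = ∑ j2 : Fin L, ∑ j1 : Fin L,
          if ((j2 : ℕ) : ℤ) + (τ + (o2 : ℤ) - (o1 : ℤ)) = ((j1 : ℕ) : ℤ)
          then u * c1 j1 * conj (v * c2 j2) else 0 := by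
    unfold accf
    rw [Finset.mul_sum]
    refine Finset.sum_congr rfl fun j2 _ => ?_
    rw [zext_eq_sum, Finset.sum_mul, Finset.mul_sum]
    refine Finset.sum_congr rfl fun j1 _ => ?_
    rw [ite_mul, zero_mul, mul_ite, mul_zero]
    refine if_congr ?_ ?_ rfl
    · constructor <;> intro <;> omega
    · rw [map_mul]; ring
  rw [rhs_eq]
  refine Finset.sum_congr rfl fun j2 _ => Finset.sum_congr rfl fun j1 _ => ?_
  refine if_congr ?_ rfl rfl
  omega

lemma Roff_add_le {P L : ℕ} (n : Fin (P + 1) → ℕ) (p : Fin P) :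
    Roff L n p + L ≤ P * L + ∑ i, n i := by
  unfold Roff
  have h1 : (∑ i : Fin (P + 1), if (i : ℕ) ≤ (p : ℕ) then n i else 0) ≤ ∑ i, n i :=
    Finset.sum_le_sum fun i _ => by split <;> simp
  have h2 : (p : ℕ) * L + L ≤ P * L := by
    have hp := p.isLt
    calc (p : ℕ) * L + L = ((p : ℕ) + 1) * L := by ring
    _ ≤ P * L := Nat.mul_le_mul_right _ (by omega)
  omega

lemma accf_Rmat {M L P : ℕ} (Cs1 Cs2 : Fin P → Fin M → Fin L → ℂ) (b1 b2 : Fin P → ℂ)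
    (n : Fin (P + 1) → ℕ) (r : Fin M) (τ : ℤ) :
    accf (Rmat Cs1 b1 n r) (Rmat Cs2 b2 n r) τ =
      ∑ p1 : Fin P, ∑ p2 : Fin P, b1 p1 * conj (b2 p2) *
        accf (Cs1 p1 r) (Cs2 p2 r) (τ + ((Roff L n p2 : ℕ) : ℤ) - ((Roff L n p1 : ℕ) : ℤ)) := by
  have hR1 : Rmat Cs1 b1 n r = fun x => ∑ p : Fin P,
      (fun p (x : Fin (P * L + ∑ i, n i)) =>
        ∑ j : Fin L, if (x : ℕ) = Roff L n p + (j : ℕ) then b1 p * Cs1 p r j else 0) p x := rfl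
  have hR2 : Rmat Cs2 b2 n r = fun x => ∑ p : Fin P,
      (fun p (x : Fin (P * L + ∑ i, n i)) =>
        ∑ j : Fin L, if (x : ℕ) = Roff L n p + (j : ℕ) then b2 p * Cs2 p r j else 0) p x := rfl
  rw [hR1, hR2, accf_sum_sum]
  refine Finset.sum_congr rfl fun p1 _ => Finset.sum_congr rfl fun p2 _ => ?_
  exact accf_block (Roff L n p1) (Roff L n p2) (Roff_add_le n p1) (Roff_add_le n p2)
    (b1 p1) (b2 p2) (Cs1 p1 r) (Cs2 p2 r) τ

lemma blockIdx_eq_iff {M P : ℕ} (hP : P ∣ M) (hPpos : 0 < P)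
    (t1 t2 : Fin M) (p1 p2 : Fin P) :
    blockIdx hP t1 p1 = blockIdx hP t2 p2 ↔ ((t1 : ℕ) / P = (t2 : ℕ) / P ∧ p1 = p2) := by
  constructor
  · intro h
    have h' : (t1 : ℕ) / P * P + (p1 : ℕ) = (t2 : ℕ) / P * P + (p2 : ℕ) :=
      congrArg Fin.val h
    have hm : ((t1 : ℕ) / P * P + (p1 : ℕ)) % P = ((t2 : ℕ) / P * P + (p2 : ℕ)) % P := by
      rw [h']
    rw [Nat.add_comm ((t1 : ℕ) / P * P), Nat.add_comm ((t2 : ℕ) / P * P),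
      Nat.add_mul_mod_self_right, Nat.add_mul_mod_self_right,
      Nat.mod_eq_of_lt p1.isLt, Nat.mod_eq_of_lt p2.isLt] at hm
    have hq : (t1 : ℕ) / P * P = (t2 : ℕ) / P * P := by omega
    exact ⟨Nat.eq_of_mul_eq_mul_right hPpos hq, Fin.ext hm⟩
  · rintro ⟨h1, rfl⟩
    apply Fin.ext
    simp only [blockIdx, Fin.val_mk, h1]

end Aux

/-- from Theorem 2: With permutations `π_0,…,π_{P−1}` satisfying
condition (13), each set `B^j = {B_{jM+1},…,B_{(j+1)M}}`, where
`B_{jM+νP+μ} = R(C_{π_j(νP+1)},…,C_{π_j((ν+1)P)}; b^μ)`, is an `(M, PL+n)` SNC-CCC. -/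
theorem multiple_snc_ccc_each_is_ccc {M L P : ℕ} (hPpos : 0 < P) (hP : P ∣ M)
    (C : Fin M → Fin M → Fin L → ℂ) (hC : IsCCC C)
    (bs : Fin P → Fin P → ℂ)
    (hMOS : ∀ μ₁ μ₂ : Fin P, μ₁ ≠ μ₂ → ∑ i : Fin P, bs μ₁ i * conj (bs μ₂ i) = 0)
    (hUni : ∀ μ i : Fin P, ‖bs μ i‖ = 1)
    (n : Fin (P + 1) → ℕ)
    (πs : Fin P → Equiv.Perm (Fin M)) (h13 : Cond13 πs)
    (Bc : Fin P → Fin M → Fin M → Fin (P * L + ∑ i, n i) → ℂ)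
    (hB : ∀ j : Fin P, ∀ t : Fin M,
      Bc j t = Rmat (fun p => C (πs j (blockIdx hP t p)))
        (bs ⟨(t : ℕ) % P, Nat.mod_lt _ hPpos⟩) n) :
    ∀ j : Fin P,
      (∀ t₁ t₂ : Fin M, ∀ τ : ℤ, (t₁ ≠ t₂ ∨ τ ≠ 0) →
        codeACCF (Bc j t₁) (Bc j t₂) τ = 0) ∧
      (∀ t : Fin M, codeACCF (Bc j t) (Bc j t) 0 = (M : ℂ) * (P : ℂ) * (L : ℂ)) := by
  intro j
  have key : ∀ t1 t2 : Fin M, ∀ τ : ℤ,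
      codeACCF (Bc j t1) (Bc j t2) τ =
        ∑ p1 : Fin P, ∑ p2 : Fin P,
          bs ⟨(t1 : ℕ) % P, Nat.mod_lt _ hPpos⟩ p1 *
            conj (bs ⟨(t2 : ℕ) % P, Nat.mod_lt _ hPpos⟩ p2) *
            codeACCF (C (πs j (blockIdx hP t1 p1))) (C (πs j (blockIdx hP t2 p2)))
              (τ + ((Roff L n p2 : ℕ) : ℤ) - ((Roff L n p1 : ℕ) : ℤ)) := by
    intro t1 t2 τ
    rw [hB j t1, hB j t2]
    unfold codeACCF
    simp_rw [accf_Rmat]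
    rw [Finset.sum_comm]
    refine Finset.sum_congr rfl fun p1 _ => ?_
    rw [Finset.sum_comm]
    refine Finset.sum_congr rfl fun p2 _ => ?_
    rw [← Finset.mul_sum]
  refine ⟨fun t1 t2 τ hne => ?_, fun t => ?_⟩
  · rw [key]
    by_cases hk : (t1 : ℕ) / P = (t2 : ℕ) / P
    · by_cases hτ : τ = 0
      · subst hτ
        have ht : t1 ≠ t2 := by
          rcases hne with h | h
          · exact h
          · exact absurd rfl h
        have hμ : (⟨(t1 : ℕ) % P, Nat.mod_lt _ hPpos⟩ : Fin P) ≠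
            ⟨(t2 : ℕ) % P, Nat.mod_lt _ hPpos⟩ := by
          intro h
          apply ht
          have h' : (t1 : ℕ) % P = (t2 : ℕ) % P := congrArg Fin.val h
          apply Fin.ext
          calc (t1 : ℕ) = P * ((t1 : ℕ) / P) + (t1 : ℕ) % P := (Nat.div_add_mod _ _).symm
            _ = P * ((t2 : ℕ) / P) + (t2 : ℕ) % P := by rw [hk, h']
            _ = (t2 : ℕ) := Nat.div_add_mod _ _
        refine Eq.trans (Finset.sum_congr rfl fun p1 _ => ?_)
          (b := ∑ p1 : Fin P, bs ⟨(t1 : ℕ) % P, Nat.mod_lt _ hPpos⟩ p1 *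
            conj (bs ⟨(t2 : ℕ) % P, Nat.mod_lt _ hPpos⟩ p1) * ((M : ℂ) * (L : ℂ))) ?_
        · rw [Finset.sum_eq_single p1]
          · have hbi : blockIdx hP t1 p1 = blockIdx hP t2 p1 :=
              (blockIdx_eq_iff hP hPpos t1 t2 p1 p1).mpr ⟨hk, rfl⟩
            rw [hbi, show (0 : ℤ) + ((Roff L n p1 : ℕ) : ℤ) - ((Roff L n p1 : ℕ) : ℤ) = 0
              by ring, hC.2]
          · intro p2 _ hne2
            have hbi : blockIdx hP t1 p1 ≠ blockIdx hP t2 p2 := fun h =>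
              hne2 (((blockIdx_eq_iff hP hPpos t1 t2 p1 p2).mp h).2.symm)
            rw [hC.1 _ _ _ (Or.inl ((πs j).injective.ne hbi)), mul_zero]
          · intro h; exact absurd (Finset.mem_univ _) h
        · rw [← Finset.sum_mul, hMOS _ _ hμ, zero_mul]
      · refine Finset.sum_eq_zero fun p1 _ => Finset.sum_eq_zero fun p2 _ => ?_
        by_cases hbi : blockIdx hP t1 p1 = blockIdx hP t2 p2
        · have hp : p1 = p2 := ((blockIdx_eq_iff hP hPpos t1 t2 p1 p2).mp hbi).2
          subst hp
          rw [hbi, hC.1 _ _ _ (Or.inr (by intro h; exact hτ (by omega))), mul_zero]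
        · rw [hC.1 _ _ _ (Or.inl ((πs j).injective.ne hbi)), mul_zero]
    · refine Finset.sum_eq_zero fun p1 _ => Finset.sum_eq_zero fun p2 _ => ?_
      have hbi : blockIdx hP t1 p1 ≠ blockIdx hP t2 p2 := fun h =>
        hk ((blockIdx_eq_iff hP hPpos t1 t2 p1 p2).mp h).1
      rw [hC.1 _ _ _ (Or.inl ((πs j).injective.ne hbi)), mul_zero]
  · rw [key]
    refine Eq.trans (Finset.sum_congr rfl fun p1 _ => ?_)
      (b := ∑ _p1 : Fin P, (M : ℂ) * (L : ℂ)) ?_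
    · rw [Finset.sum_eq_single p1]
      · rw [show (0 : ℤ) + ((Roff L n p1 : ℕ) : ℤ) - ((Roff L n p1 : ℕ) : ℤ) = 0 by ring,
          hC.2, Complex.mul_conj, ← Complex.sq_norm, hUni]
        norm_num
      · intro p2 _ hne2
        have hbi : blockIdx hP t p1 ≠ blockIdx hP t p2 := fun h =>
          hne2 (((blockIdx_eq_iff hP hPpos t t p1 p2).mp h).2.symm)
        rw [hC.1 _ _ _ (Or.inl ((πs j).injective.ne hbi)), mul_zero]
      · intro h; exact absurd (Finset.mem_univ _) h
    · rw [Finset.sum_const, Finset.card_univ, Fintype.card_fin, nsmul_eq_mul]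
      ring


end
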